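/- arXiv:1402.3921 — 3 statements merged into one kernel-verified Lean document; each statement's English description precedes it below -/
import Mathlib

section
/- Under SRSWOR of size n from a population of size N ≥ 3, the third central moment of the sample mean satisfies E((ȳ − Ȳ)³) = ((N−n)(N−2n))/((N−1)(N−2)n²) · μ₃, where μ₃ = (1/N)∑_{i=1}^N (y_i − Ȳ)³. -/
/-!
Put `zᵢ = yᵢ - Ȳ`, so that `∑ zᵢ = 0` and `n (ȳ - Ȳ) = ∑_{i ∈ S} zᵢ`. Expanding the cube and
exchanging sums, `∑_S (∑_{i ∈ S} zᵢ)³ = ∑_{i,j,k} #{S ⊇ {i, j, k}} zᵢ zⱼ zₖ`, and a fixed `m`-set lies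
in exactly `w m = C(N, n) n^(m) / N^(m)` samples (falling factorials). As the weight depends only on
which indices coincide, and any sum in which an index runs freely against `z` vanishes, only the
full diagonal survives, with coefficient `w 1 - 3 w 2 + 2 w 3 = C(N, n) n (N - n) (N - 2n) / N^(3)`.
-/

open Finset

theorem card_filter_powersetCard_subset_mul_descFactorial {α : Type*} [DecidableEq α]
    (s t : Finset α) (n : ℕ) (hst : s ⊆ t) :
    #((t.powersetCard n).filter (s ⊆ ·)) * (#t).descFactorial #s
      = (#t).choose n * n.descFactorial #s := by
  by_cases hsn : #s ≤ n
  · rw [card_filter_powersetCard_subset s t n hst hsn, Nat.descFactorial_eq_factorial_mul_choose,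
      Nat.descFactorial_eq_factorial_mul_choose, mul_left_comm (Nat.choose _ n),
      Nat.choose_mul hsn]
    ring
  · have hempty : (t.powersetCard n).filter (s ⊆ ·) = ∅ :=
      filter_eq_empty_iff.2 fun u hu hsu =>
        hsn ((card_le_card hsu).trans (mem_powersetCard.1 hu).2.le)
    rw [hempty, Nat.descFactorial_eq_zero_iff_lt.2 (not_le.1 hsn)]
    simp

section Triples

variable {α R : Type*} [DecidableEq α]

theorem weight_card_triple_mul [CommRing R] (w : ℕ → R) (z : α → R) (i j k : α) :
    w #({i, j, k} : Finset α) * (z i * z j * z k)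
      = w 3 * (z i * z j * z k)
        + (w 2 - w 3) * ((if i = j then z i * z j * z k else 0)
          + (if j = k then z i * z j * z k else 0) + (if i = k then z i * z j * z k else 0))
        + (w 1 - 3 * w 2 + 2 * w 3) * (if i = j ∧ j = k then z i * z j * z k else 0) := by
  by_cases hij : i = j <;> by_cases hjk : j = k <;> by_cases hik : i = k <;>
    simp_all [card_insert_of_notMem] <;> ring

variable [Fintype α]

theorem sum_sum_pow_three_eq_sum_card_filter_subset [CommSemiring R]
    (𝒮 : Finset (Finset α)) (z : α → R) :
    ∑ S ∈ 𝒮, (∑ i ∈ S, z i) ^ 3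
      = ∑ i, ∑ j, ∑ k, #(𝒮.filter ({i, j, k} ⊆ ·)) * (z i * z j * z k) := by
  have hcube (S : Finset α) : (∑ i ∈ S, z i) ^ 3
      = ∑ i, ∑ j, ∑ k, if {i, j, k} ⊆ S then z i * z j * z k else 0 := by
    rw [← Fintype.sum_ite_mem, pow_three', sum_mul_sum]
    simp only [sum_mul]
    simp only [mul_sum, ite_zero_mul_ite_zero, insert_subset_iff, singleton_subset_iff, and_assoc]
  simp only [hcube, sum_comm (s := 𝒮)]
  simp only [← sum_filter, sum_const, nsmul_eq_mul]

theorem sum_weight_card_triple_of_sum_eq_zero [CommRing R] (w : ℕ → R) (z : α → R)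
    (hz : ∑ i, z i = 0) :
    ∑ i, ∑ j, ∑ k, w #({i, j, k} : Finset α) * (z i * z j * z k)
      = (w 1 - 3 * w 2 + 2 * w 3) * ∑ i, z i ^ 3 := by
  have h₀ : ∑ i, ∑ j, ∑ k, z i * z j * z k = 0 := by simp [← mul_sum, hz]
  have hij : ∑ i, ∑ j, ∑ k, (if i = j then z i * z j * z k else 0) = 0 := by
    simp [sum_ite_irrel, ← mul_sum, hz]
  have hjk : ∑ i, ∑ j, ∑ k, (if j = k then z i * z j * z k else 0) = 0 := by
    simp [mul_assoc, ← mul_sum, ← sum_mul, hz]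
  have hik : ∑ i, ∑ j, ∑ k, (if i = k then z i * z j * z k else 0) = 0 := by
    simp [mul_right_comm _ (z _) (z _), ← mul_sum, hz]
  have hijk : ∑ i, ∑ j, ∑ k, (if i = j ∧ j = k then z i * z j * z k else 0) = ∑ i, z i ^ 3 := by
    simp [ite_and, sum_ite_irrel, pow_three']
  calc ∑ i, ∑ j, ∑ k, w #({i, j, k} : Finset α) * (z i * z j * z k)
      = w 3 * (∑ i, ∑ j, ∑ k, z i * z j * z k)
        + (w 2 - w 3) * ((∑ i, ∑ j, ∑ k, (if i = j then z i * z j * z k else 0))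
          + (∑ i, ∑ j, ∑ k, (if j = k then z i * z j * z k else 0))
          + (∑ i, ∑ j, ∑ k, (if i = k then z i * z j * z k else 0)))
        + (w 1 - 3 * w 2 + 2 * w 3)
          * ∑ i, ∑ j, ∑ k, (if i = j ∧ j = k then z i * z j * z k else 0) := by
        simp only [weight_card_triple_mul, sum_add_distrib, mul_sum, mul_add]
    _ = (w 1 - 3 * w 2 + 2 * w 3) * ∑ i, z i ^ 3 := by
        rw [h₀, hij, hjk, hik, hijk]
        ring

end Triples

theorem sum_powersetCard_sum_pow_three {α K : Type*} [Fintype α] [DecidableEq α] [Field K]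
    [CharZero K] (hα : 3 ≤ Fintype.card α) (n : ℕ) (z : α → K) (hz : ∑ i, z i = 0) :
    ∑ S ∈ (univ : Finset α).powersetCard n, (∑ i ∈ S, z i) ^ 3
      = (Fintype.card α).choose n * (n * (Fintype.card α - n) * (Fintype.card α - 2 * n)
          / (Fintype.card α * (Fintype.card α - 1) * (Fintype.card α - 2))) * ∑ i, z i ^ 3 := by
  set N := Fintype.card α
  set w : ℕ → K := fun m => N.choose n * n.descFactorial m / N.descFactorial m
  have hcount (T : Finset α) : (#((univ.powersetCard n).filter (T ⊆ ·)) : K) = w #T := by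
    have hT : N.descFactorial #T ≠ 0 :=
      Nat.descFactorial_eq_zero_iff_lt.not.2 (not_lt.2 (card_le_univ T))
    rw [eq_div_iff (by exact_mod_cast hT)]
    exact_mod_cast card_filter_powersetCard_subset_mul_descFactorial T univ n (subset_univ T)
  rw [sum_sum_pow_three_eq_sum_card_filter_subset]
  simp only [hcount]
  rw [sum_weight_card_triple_of_sum_eq_zero w z hz]
  have h0 : (N : K) ≠ 0 := Nat.cast_ne_zero.2 (by omega)
  have h1 : (N : K) - 1 ≠ 0 := sub_ne_zero.2 (Nat.cast_ne_one.2 (by omega))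
  have h2 : (N : K) - 2 ≠ 0 := sub_ne_zero.2 (by exact_mod_cast (by omega : N ≠ 2))
  congr 1
  simp only [w, ← descPochhammer_eval_eq_descFactorial K]
  simp only [descPochhammer_one, Polynomial.eval_X, descPochhammer_succ_eval, Nat.cast_one,
    Nat.cast_ofNat]
  field_simp
  ring

/-- Under SRSWOR of size `n` from a population of size `N ≥ 3`, the third central moment
of the sample mean satisfies
`E((ȳ − Ȳ)³) = ((N−n)(N−2n))/((N−1)(N−2)n²) · μ₃`,
where `μ₃ = (1/N)∑ (yᵢ − Ȳ)³`. -/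
theorem srswor_third_central_moment (N n : ℕ) (hN : 3 ≤ N) (hn1 : 1 ≤ n) (hnN : n ≤ N)
    (y : Fin N → ℝ) (Ybar : ℝ) (hYbar : Ybar = (∑ i, y i) / (N : ℝ)) :
    (∑ S ∈ (univ : Finset (Fin N)).powersetCard n,
        ((∑ i ∈ S, y i) / (n : ℝ) - Ybar) ^ 3) /
      (((univ : Finset (Fin N)).powersetCard n).card : ℝ)
      = (((N : ℝ) - n) * ((N : ℝ) - 2 * n)) / ((((N : ℝ) - 1) * ((N : ℝ) - 2)) * (n : ℝ) ^ 2) *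
          ((∑ i, (y i - Ybar) ^ 3) / (N : ℝ)) := by
  set z : Fin N → ℝ := fun i => y i - Ybar
  have hn : (n : ℝ) ≠ 0 := Nat.cast_ne_zero.2 (by omega)
  have hN0 : (N : ℝ) ≠ 0 := Nat.cast_ne_zero.2 (by omega)
  have hz : ∑ i, z i = 0 := by simp [z, sum_sub_distrib, hYbar, mul_div_cancel₀ _ hN0]
  have hcentre (S : Finset (Fin N)) (hS : S ∈ (univ : Finset (Fin N)).powersetCard n) :
      ((∑ i ∈ S, y i) / n - Ybar) ^ 3 = (∑ i ∈ S, z i) ^ 3 / n ^ 3 := by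
    rw [← div_pow, sum_sub_distrib, sum_const, (mem_powersetCard.1 hS).2, nsmul_eq_mul]
    field_simp
  have hchoose : (N.choose n : ℝ) ≠ 0 := Nat.cast_ne_zero.2 (Nat.choose_pos hnN).ne'
  rw [sum_congr rfl hcentre, ← sum_div,
    sum_powersetCard_sum_pow_three (by simpa using hN) n z hz, card_powersetCard]
  simp only [card_univ, Fintype.card_fin]
  field_simp
  ring
end

section
/- Under SRSWOR of size n from a population of size N ≥ 4, E((x̄ − X̄)³(z̄ − Z̄)) = L₃·C₀₃₁ + 3L₄·C₀₂₀C₀₁₁, where L₃ = (N−n)(N² + N − 6nN + 6n²)/((N−1)(N−2)(N−3)n³), L₄ = N(N−n)(N−n−1)(n−1)/((N−1)(N−2)(N−3)n³), C₀₃₁ = (1/N)∑(x_i − X̄)³(z_i − Z̄), C₀₂₀ = (1/N)∑(x_i − X̄)², C₀₁₁ = (1/N)∑(x_i − X̄)(z_i − Z̄). -/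
/-!
Write `a = x - X̄` and `b = z - Z̄`. Expanding `(∑_{i ∈ S} a i)³ ∑_{i ∈ S} b i` by the pattern of
coincidences among the four indices turns it into sums over pairwise distinct indices of `S`.
Averaged over all `n`-subsets `S` of a population of size `N`, such a sum over `m` distinct
indices only picks up the factor `n (n-1) ⋯ (n-m+1) / (N (N-1) ⋯ (N-m+1))`, the probability that
`m` given units are all sampled. Over the whole population, inclusion–exclusion rewrites sums over
distinct indices in terms of power sums, and centring kills every term that contains `∑ a` or
`∑ b`; what survives is `∑ a³b` and `(∑ a²)(∑ ab)`.
-/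

open Finset

theorem Nat.cast_descFactorial_succ {S : Type*} [Ring S] (a k : ℕ) :
    (a.descFactorial (k + 1) : S) = a.descFactorial k * (a - k) := by
  rw [Nat.descFactorial_succ, Nat.cast_mul, (Nat.cast_commute _ _).eq]
  rcases le_or_gt k a with h | h
  · rw [Nat.cast_sub h]
  · rw [Nat.descFactorial_eq_zero_iff_lt.mpr h, Nat.cast_zero, zero_mul, zero_mul]

namespace Finset

variable {α R : Type*}

section Centring

variable {K : Type*} [Field K]

theorem sum_sub_div_card_eq_zero [CharZero K] (s : Finset α)
    (hs : s.Nonempty) (f : α → K) : ∑ i ∈ s, (f i - (∑ j ∈ s, f j) / #s) = 0 := by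
  have : (#s : K) ≠ 0 := by exact_mod_cast hs.card_pos.ne'
  rw [sum_sub_distrib, sum_const, nsmul_eq_mul, mul_div_cancel₀ _ this, sub_self]

theorem sum_div_sub_eq_sum_sub_div (s : Finset α) (f : α → K) (c : K) {n : ℕ}
    (hs : #s = n) (hn : (n : K) ≠ 0) :
    (∑ i ∈ s, f i) / n - c = (∑ i ∈ s, (f i - c)) / n := by
  rw [sum_sub_distrib, sum_const, hs, nsmul_eq_mul, sub_div, mul_div_cancel_left₀ _ hn]

end Centring

variable [DecidableEq α]

/-- `distinctSum [f₁, …, fₘ] s = ∑ f₁ i₁ * ⋯ * fₘ iₘ` over pairwise distinct `i₁, …, iₘ ∈ s`. -/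
def distinctSum [CommSemiring R] : List (α → R) → Finset α → R
  | [], _ => 1
  | f :: fs, s => ∑ i ∈ s, f i * distinctSum fs (s.erase i)

section CommSemiring

variable [CommSemiring R]

@[simp]
theorem distinctSum_nil (s : Finset α) : distinctSum ([] : List (α → R)) s = 1 := rfl

theorem distinctSum_cons (f : α → R) (fs : List (α → R)) (s : Finset α) :
    distinctSum (f :: fs) s = ∑ i ∈ s, f i * distinctSum fs (s.erase i) := rfl

theorem distinctSum_eq_zero_of_card_lt {fs : List (α → R)} {s : Finset α}
    (h : #s < fs.length) : distinctSum fs s = 0 := by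
  induction fs generalizing s with
  | nil => simp at h
  | cons f fs ih =>
    refine sum_eq_zero fun i hi => ?_
    have : 0 < #s := card_pos.mpr ⟨i, hi⟩
    rw [ih (by rw [card_erase_of_mem hi]; simp at h; omega), mul_zero]

theorem distinctSum_singleton (f : α → R) (s : Finset α) :
    distinctSum [f] s = ∑ i ∈ s, f i := by
  simp [distinctSum_cons]

/-- The new index either coincides with one of the `m` existing ones or differs from all of them. -/
theorem distinctSum_mul_sum (fs : List (α → R)) (k : α → R) (s : Finset α) :
    distinctSum fs s * ∑ i ∈ s, k i =
      ∑ j ∈ range fs.length, distinctSum (fs.modify j fun f i => f i * k i) s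
        + distinctSum (fs ++ [k]) s := by
  induction fs generalizing s with
  | nil => simp [distinctSum_cons]
  | cons f fs ih =>
    have split_sum : ∀ i ∈ s, ∑ l ∈ s, k l = k i + ∑ l ∈ s.erase i, k l :=
      fun i hi => (add_sum_erase s k hi).symm
    calc distinctSum (f :: fs) s * ∑ l ∈ s, k l
        = ∑ i ∈ s, f i * k i * distinctSum fs (s.erase i)
          + ∑ i ∈ s, f i * (distinctSum fs (s.erase i) * ∑ l ∈ s.erase i, k l) := by
          rw [distinctSum_cons, sum_mul, ← sum_add_distrib]
          refine sum_congr rfl fun i hi => ?_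
          rw [split_sum i hi]
          ring
      _ = _ := by
          simp only [ih, mul_add, mul_sum, sum_add_distrib, List.length_cons, sum_range_succ',
            List.modify_succ_cons, List.modify_zero_cons, List.cons_append, distinctSum_cons]
          rw [sum_comm]
          ring

theorem sum_powersetCard_succ_sum_erase {M : Type*} [AddCommMonoid M] (U : Finset α) (n : ℕ)
    (G : α → Finset α → M) :
    ∑ S ∈ U.powersetCard (n + 1), ∑ i ∈ S, G i (S.erase i) =
      ∑ i ∈ U, ∑ T ∈ (U.erase i).powersetCard n, G i T := by
  rw [sum_comm' (t' := U) (s' := fun i => (U.powersetCard (n + 1)).filter (i ∈ ·))]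
  · refine sum_congr rfl fun i hi => ?_
    refine sum_nbij' (fun S => S.erase i) (insert i) ?_ ?_ ?_ ?_ ?_
    · intro S hS
      simp only [mem_filter, mem_powersetCard] at hS
      simp only [mem_powersetCard, card_erase_of_mem hS.2, hS.1.2]
      exact ⟨erase_subset_erase i hS.1.1, rfl⟩
    · intro T hT
      simp only [mem_powersetCard, subset_erase] at hT
      simp only [mem_filter, mem_powersetCard, mem_insert_self, and_true,
        card_insert_of_notMem hT.1.2, hT.2]
      exact insert_subset hi hT.1.1
    · intro S hS
      simp only [mem_filter] at hS
      exact insert_erase hS.2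
    · intro T hT
      simp only [mem_powersetCard, subset_erase] at hT
      exact erase_insert hT.1.2
    · exact fun _ _ => rfl
  · intro S i
    simp only [mem_filter, mem_powersetCard]
    constructor
    · rintro ⟨⟨hSU, hS⟩, hi⟩; exact ⟨⟨⟨hSU, hS⟩, hi⟩, hSU hi⟩
    · rintro ⟨⟨⟨hSU, hS⟩, hi⟩, -⟩; exact ⟨⟨hSU, hS⟩, hi⟩

theorem descFactorial_mul_sum_powersetCard_distinctSum (fs : List (α → R)) (U : Finset α)
    (n : ℕ) :
    ((#U).descFactorial fs.length : R) * ∑ S ∈ U.powersetCard n, distinctSum fs S =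
      ((#U).choose n * n.descFactorial fs.length : R) * distinctSum fs U := by
  induction fs generalizing U n with
  | nil => simp
  | cons f fs ih =>
    cases n with
    | zero => simp [distinctSum_cons]
    | succ n =>
      rw [sum_congr rfl fun S _ => distinctSum_cons f fs S,
        sum_powersetCard_succ_sum_erase U n fun i T => f i * distinctSum fs T, distinctSum_cons,
        mul_sum, mul_sum]
      refine sum_congr rfl fun i hi => ?_
      obtain ⟨m, hm⟩ : ∃ m, #U = m + 1 := ⟨_, (card_erase_add_one hi).symm⟩
      have hm' : #(U.erase i) = m := by rw [card_erase_of_mem hi, hm, Nat.add_sub_cancel]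
      have hchoose : (m + 1) * m.choose n * n.descFactorial fs.length =
          (m + 1).choose (n + 1) * ((n + 1) * n.descFactorial fs.length) := by
        rw [Nat.add_one_mul_choose_eq]
        ring
      rw [hm, List.length_cons, Nat.succ_descFactorial_succ, Nat.succ_descFactorial_succ]
      calc (((m + 1) * m.descFactorial fs.length : ℕ) : R) *
            ∑ T ∈ (U.erase i).powersetCard n, f i * distinctSum fs T
          = (m + 1) * f i * ((#(U.erase i)).descFactorial fs.length *
              ∑ T ∈ (U.erase i).powersetCard n, distinctSum fs T) := by
            rw [hm', ← mul_sum]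
            push_cast
            ring
        _ = (((m + 1) * m.choose n * n.descFactorial fs.length : ℕ) : R) *
              (f i * distinctSum fs (U.erase i)) := by
            rw [ih, hm']
            push_cast
            ring
        _ = _ := by
            rw [hchoose]
            push_cast
            ring

end CommSemiring

section CommRing

variable [CommRing R] (f g h k : α → R) (s : Finset α)

theorem distinctSum_pair :
    distinctSum [f, g] s = (∑ i ∈ s, f i) * (∑ i ∈ s, g i) - ∑ i ∈ s, f i * g i := by
  have := distinctSum_mul_sum [f] g s
  simp only [List.length_singleton, sum_range_one, List.modify_zero_cons, List.singleton_append,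
    distinctSum_singleton] at this
  linear_combination -this

theorem distinctSum_triple :
    distinctSum [f, g, h] s =
      (∑ i ∈ s, f i) * (∑ i ∈ s, g i) * (∑ i ∈ s, h i)
        - (∑ i ∈ s, f i * g i) * (∑ i ∈ s, h i) - (∑ i ∈ s, f i * h i) * (∑ i ∈ s, g i)
        - (∑ i ∈ s, g i * h i) * (∑ i ∈ s, f i) + 2 * ∑ i ∈ s, f i * g i * h i := by
  have := distinctSum_mul_sum [f, g] h s
  simp only [List.length_cons, List.length_nil, sum_range_succ, sum_range_zero,
    List.modify_zero_cons, List.modify_succ_cons, List.cons_append, List.nil_append,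
    distinctSum_pair, zero_add] at this
  simp only [mul_comm, mul_left_comm] at this ⊢
  linear_combination -this

theorem distinctSum_quad :
    distinctSum [f, g, h, k] s =
      (∑ i ∈ s, f i) * (∑ i ∈ s, g i) * (∑ i ∈ s, h i) * (∑ i ∈ s, k i)
        - (∑ i ∈ s, f i * g i) * (∑ i ∈ s, h i) * (∑ i ∈ s, k i)
        - (∑ i ∈ s, f i * h i) * (∑ i ∈ s, g i) * (∑ i ∈ s, k i)
        - (∑ i ∈ s, f i * k i) * (∑ i ∈ s, g i) * (∑ i ∈ s, h i)
        - (∑ i ∈ s, g i * h i) * (∑ i ∈ s, f i) * (∑ i ∈ s, k i)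
        - (∑ i ∈ s, g i * k i) * (∑ i ∈ s, f i) * (∑ i ∈ s, h i)
        - (∑ i ∈ s, h i * k i) * (∑ i ∈ s, f i) * (∑ i ∈ s, g i)
        + (∑ i ∈ s, f i * g i) * (∑ i ∈ s, h i * k i)
        + (∑ i ∈ s, f i * h i) * (∑ i ∈ s, g i * k i)
        + (∑ i ∈ s, f i * k i) * (∑ i ∈ s, g i * h i)
        + 2 * (∑ i ∈ s, f i * g i * h i) * (∑ i ∈ s, k i)
        + 2 * (∑ i ∈ s, f i * g i * k i) * (∑ i ∈ s, h i)
        + 2 * (∑ i ∈ s, f i * h i * k i) * (∑ i ∈ s, g i)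
        + 2 * (∑ i ∈ s, g i * h i * k i) * (∑ i ∈ s, f i)
        - 6 * ∑ i ∈ s, f i * g i * h i * k i := by
  have := distinctSum_mul_sum [f, g, h] k s
  simp only [List.length_cons, List.length_nil, sum_range_succ, sum_range_zero,
    List.modify_zero_cons, List.modify_succ_cons, List.cons_append, List.nil_append,
    distinctSum_triple, zero_add] at this
  simp only [mul_comm, mul_left_comm, mul_assoc] at this ⊢
  linear_combination -this

/-- The coefficients count the set partitions of the four factor positions of each block type. -/
theorem sum_pow_three_mul_sum_eq_distinctSum (a b : α → R) (s : Finset α) :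
    (∑ i ∈ s, a i) ^ 3 * ∑ i ∈ s, b i =
      distinctSum [fun i => a i * a i * a i * b i] s
        + distinctSum [fun i => a i * a i * a i, b] s
        + 3 * distinctSum [fun i => a i * a i * b i, a] s
        + 3 * distinctSum [fun i => a i * a i, fun i => a i * b i] s
        + 3 * distinctSum [fun i => a i * a i, a, b] s
        + 3 * distinctSum [fun i => a i * b i, a, a] s
        + distinctSum [a, a, a, b] s := by
  simp only [distinctSum_singleton, distinctSum_pair, distinctSum_triple, distinctSum_quad]
  simp only [mul_comm, mul_left_comm]
  ring

end CommRing

section Field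

variable {K : Type*} [Field K] [CharZero K]

theorem sum_powersetCard_distinctSum (fs : List (α → K)) (U : Finset α) (n : ℕ) :
    ∑ S ∈ U.powersetCard n, distinctSum fs S =
      (#U).choose n * n.descFactorial fs.length / (#U).descFactorial fs.length *
        distinctSum fs U := by
  by_cases h : fs.length ≤ #U
  · have hpos : ((#U).descFactorial fs.length : K) ≠ 0 := by
      exact_mod_cast (Nat.descFactorial_pos.mpr h).ne'
    rw [div_mul_eq_mul_div, eq_div_iff hpos, mul_comm,
      descFactorial_mul_sum_powersetCard_distinctSum]
  · rw [distinctSum_eq_zero_of_card_lt (not_le.mp h), mul_zero]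
    refine sum_eq_zero fun S hS => distinctSum_eq_zero_of_card_lt ?_
    exact (card_le_card (mem_powersetCard.mp hS).1).trans_lt (not_le.mp h)

theorem sum_powersetCard_sum_pow_three_mul_sum (U : Finset α) (hU : 4 ≤ #U) (n : ℕ)
    (a b : α → K) (ha : ∑ i ∈ U, a i = 0) (hb : ∑ i ∈ U, b i = 0) :
    ∑ S ∈ U.powersetCard n, (∑ i ∈ S, a i) ^ 3 * ∑ i ∈ S, b i =
      (#U).choose n * n * (#U - n) / (#U * (#U - 1) * (#U - 2) * (#U - 3)) *
        ((#U ^ 2 + #U - 6 * n * #U + 6 * n ^ 2) * ∑ i ∈ U, a i ^ 3 * b i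
          + 3 * (#U - n - 1) * (n - 1) * ((∑ i ∈ U, a i ^ 2) * ∑ i ∈ U, a i * b i)) := by
  simp only [sum_pow_three_mul_sum_eq_distinctSum, sum_add_distrib, ← mul_sum,
    sum_powersetCard_distinctSum]
  simp only [distinctSum_singleton, distinctSum_pair, distinctSum_triple, distinctSum_quad, ha, hb,
    List.length_cons, List.length_nil]
  simp only [Nat.cast_descFactorial_succ, Nat.descFactorial_zero, Nat.cast_one, one_mul,
    zero_add, Nat.reduceAdd, Nat.cast_ofNat, Nat.cast_zero, sub_zero, pow_succ, pow_zero]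
  have h0 : (#U : K) ≠ 0 := by exact_mod_cast (by omega : #U ≠ 0)
  have h1 : (#U : K) - 1 ≠ 0 := sub_ne_zero.mpr (by exact_mod_cast (by omega : #U ≠ 1))
  have h2 : (#U : K) - 2 ≠ 0 := sub_ne_zero.mpr (by exact_mod_cast (by omega : #U ≠ 2))
  have h3 : (#U : K) - 3 ≠ 0 := sub_ne_zero.mpr (by exact_mod_cast (by omega : #U ≠ 3))
  field_simp
  ring

end Field

end Finset

/-- Under SRSWOR of size `n` from a population of size `N ≥ 4`,
`E((x̄ − X̄)³(z̄ − Z̄)) = L₃·C₀₃₁ + 3L₄·C₀₂₀C₀₁₁`, where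
`L₃ = (N−n)(N² + N − 6nN + 6n²)/((N−1)(N−2)(N−3)n³)`,
`L₄ = N(N−n)(N−n−1)(n−1)/((N−1)(N−2)(N−3)n³)` and `C₀₃₁, C₀₂₀, C₀₁₁` are the
population mixed central moments. -/
theorem srswor_fourth_mixed_moment (N n : ℕ) (hN : 4 ≤ N) (hn1 : 1 ≤ n) (hnN : n ≤ N)
    (x z : Fin N → ℝ) (Xbar Zbar : ℝ)
    (hXbar : Xbar = (∑ i, x i) / (N : ℝ)) (hZbar : Zbar = (∑ i, z i) / (N : ℝ)) :
    (∑ S ∈ (univ : Finset (Fin N)).powersetCard n,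
        ((∑ i ∈ S, x i) / (n : ℝ) - Xbar) ^ 3 * ((∑ i ∈ S, z i) / (n : ℝ) - Zbar)) /
      (((univ : Finset (Fin N)).powersetCard n).card : ℝ)
      = (((N : ℝ) - n) * ((N : ℝ) ^ 2 + N - 6 * n * N + 6 * (n : ℝ) ^ 2))
          / ((((N : ℝ) - 1) * ((N : ℝ) - 2) * ((N : ℝ) - 3)) * (n : ℝ) ^ 3) *
          ((∑ i, (x i - Xbar) ^ 3 * (z i - Zbar)) / (N : ℝ))
        + 3 * ((N : ℝ) * ((N : ℝ) - n) * ((N : ℝ) - n - 1) * ((n : ℝ) - 1)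
          / ((((N : ℝ) - 1) * ((N : ℝ) - 2) * ((N : ℝ) - 3)) * (n : ℝ) ^ 3)) *
          (((∑ i, (x i - Xbar) ^ 2) / (N : ℝ)) *
            ((∑ i, (x i - Xbar) * (z i - Zbar)) / (N : ℝ))) := by
  have hU : (univ : Finset (Fin N)).Nonempty := univ_nonempty_iff.mpr ⟨⟨0, by omega⟩⟩
  have hn : (n : ℝ) ≠ 0 := by exact_mod_cast (by omega : n ≠ 0)
  have hcentred : ∀ S ∈ (univ : Finset (Fin N)).powersetCard n,
      ((∑ i ∈ S, x i) / (n : ℝ) - Xbar) ^ 3 * ((∑ i ∈ S, z i) / (n : ℝ) - Zbar) =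
        (∑ i ∈ S, (x i - Xbar)) ^ 3 * (∑ i ∈ S, (z i - Zbar)) / n ^ 4 := fun S hS => by
    rw [sum_div_sub_eq_sum_sub_div S x Xbar (mem_powersetCard.mp hS).2 hn,
      sum_div_sub_eq_sum_sub_div S z Zbar (mem_powersetCard.mp hS).2 hn]
    ring
  have hsum : ∀ y : Fin N → ℝ, ∑ i, (y i - (∑ j, y j) / N) = 0 := fun y => by
    simpa using sum_sub_div_card_eq_zero univ hU y
  rw [sum_congr rfl hcentred, ← sum_div,
    sum_powersetCard_sum_pow_three_mul_sum univ (by simpa using hN) n _ _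
      (hXbar ▸ hsum x) (hZbar ▸ hsum z), card_powersetCard]
  simp only [card_univ, Fintype.card_fin]
  have hC : (N.choose n : ℝ) ≠ 0 := by exact_mod_cast (Nat.choose_pos hnN).ne'
  have h0 : (N : ℝ) ≠ 0 := by exact_mod_cast (by omega : N ≠ 0)
  have h1 : (N : ℝ) - 1 ≠ 0 := sub_ne_zero.mpr (by exact_mod_cast (by omega : N ≠ 1))
  have h2 : (N : ℝ) - 2 ≠ 0 := sub_ne_zero.mpr (by exact_mod_cast (by omega : N ≠ 2))
  have h3 : (N : ℝ) - 3 ≠ 0 := sub_ne_zero.mpr (by exact_mod_cast (by omega : N ≠ 3))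
  field_simp
end

section
/- Under SRSWOR of size n from a population of size N ≥ 3 with two variables x and z, E((x̄ − X̄)²(z̄ − Z̄)) = ((N−n)(N−2n))/((N−1)(N−2)n²) · C₀₂₁, where C₀₂₁ = (1/N)∑_{i=1}^N (x_i − X̄)²(z_i − Z̄). -/
/-!
With `a = x - X̄` and `b = z - Z̄`, which sum to zero, `n³ (x̄ - X̄)² (z̄ - Z̄)` is
`∑_{i,j,k ∈ S} aᵢ aⱼ b_k`. Averaged over `S`, the triple `(i, j, k)` is weighted by the
probability `π_m = n(n-1)⋯(n-m+1) / N(N-1)⋯(N-m+1)` that `S` contains its `m = #{i, j, k}`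
distinct indices. Writing `π_{#{i,j,k}}` in terms of the indicators of `i = j`, `i = k`, `j = k`
and `i = j = k`, every term but the last leaves an index free to sum `a` or `b` to zero, so only
`(π₁ - 3π₂ + 2π₃) ∑ aᵢ² bᵢ` survives, and
`π₁ - 3π₂ + 2π₃ = n(N-n)(N-2n) / (N(N-1)(N-2))`.
-/

open Finset

namespace Finset

variable {α : Type*} [DecidableEq α]

theorem card_filter_powersetCard_subset_mul_descFactorial {s t : Finset α} (hst : s ⊆ t)
    (n : ℕ) :
    #{S ∈ t.powersetCard n | s ⊆ S} * (#t).descFactorial #s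
      = (#t).choose n * n.descFactorial #s := by
  rcases le_or_gt #s n with hsn | hns
  · rw [card_filter_powersetCard_subset s t n hst hsn, Nat.descFactorial_eq_factorial_mul_choose,
      Nat.descFactorial_eq_factorial_mul_choose]
    linear_combination (#s).factorial * (Nat.choose_mul (n := #t) hsn).symm
  · have hempty : {S ∈ t.powersetCard n | s ⊆ S} = ∅ := by
      refine filter_eq_empty_iff.2 fun S hS hsS => ?_
      have := card_le_card hsS
      rw [(mem_powersetCard.1 hS).2] at this
      omega
    rw [hempty, (Nat.descFactorial_eq_zero_iff_lt).2 hns, card_empty, zero_mul, mul_zero]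

theorem sum_sq_mul_sum_eq_sum_card_filter_subset [Fintype α] {R : Type*} [CommSemiring R]
    (𝒜 : Finset (Finset α)) (a b : α → R) :
    ∑ S ∈ 𝒜, (∑ i ∈ S, a i) ^ 2 * ∑ i ∈ S, b i
      = ∑ i, ∑ j, ∑ k, a i * a j * b k * #{S ∈ 𝒜 | {i, j, k} ⊆ S} := by
  have expand (S : Finset α) : (∑ i ∈ S, a i) ^ 2 * ∑ i ∈ S, b i
      = ∑ i, ∑ j, ∑ k, if {i, j, k} ⊆ S then a i * a j * b k else 0 := by
    have sum_eq (c : α → R) : ∑ i ∈ S, c i = ∑ i, if i ∈ S then c i else 0 := by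
      rw [sum_ite_mem, univ_inter]
    rw [sum_eq, sum_eq, sq, sum_mul_sum, sum_mul]
    refine sum_congr rfl fun i _ => ?_
    rw [sum_mul]
    refine sum_congr rfl fun j _ => ?_
    rw [mul_sum]
    refine sum_congr rfl fun k _ => ?_
    simp only [insert_subset_iff, singleton_subset_iff]
    split_ifs <;> simp_all
  simp_rw [expand, natCast_card_filter, mul_sum, mul_boole]
  rw [sum_comm]; refine sum_congr rfl fun i _ => ?_
  rw [sum_comm]; refine sum_congr rfl fun j _ => ?_
  rw [sum_comm]

theorem apply_card_insert_insert_singleton {R : Type*} [CommRing R] (f : ℕ → R) (i j k : α) :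
    f #{i, j, k} = f 3 + (f 2 - f 3) * ((if i = j then 1 else 0) + (if i = k then 1 else 0)
        + (if j = k then 1 else 0))
      + (f 1 - 3 * f 2 + 2 * f 3) * (if i = j ∧ j = k then 1 else 0) := by
  by_cases hij : i = j <;> by_cases hik : i = k <;> by_cases hjk : j = k <;> subst_vars <;>
    simp_all [card_insert_of_notMem, Ne.symm]
  ring

theorem sum_mul_apply_card_of_sum_eq_zero [Fintype α] {R : Type*} [CommRing R] {a b : α → R}
    (ha : ∑ i, a i = 0) (hb : ∑ i, b i = 0) (f : ℕ → R) :
    ∑ i, ∑ j, ∑ k, a i * a j * b k * f #{i, j, k}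
      = (f 1 - 3 * f 2 + 2 * f 3) * ∑ i, a i ^ 2 * b i := by
  have split (i j k : α) : a i * a j * b k * f #{i, j, k}
      = f 3 * (a i * a j * b k) + (f 2 - f 3) * ((if i = j then a i * a j * b k else 0)
        + (if i = k then a i * a j * b k else 0) + (if j = k then a i * a j * b k else 0))
        + (f 1 - 3 * f 2 + 2 * f 3) * (if i = j ∧ j = k then a i * a j * b k else 0) := by
    rw [apply_card_insert_insert_singleton f]
    split_ifs <;> ring
  have hij : ∑ i, ∑ j, ∑ k, (if i = j then a i * a j * b k else 0) = 0 := by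
    simp [← mul_sum, hb]
  have hik : ∑ i, ∑ j, ∑ k, (if i = k then a i * a j * b k else 0) = 0 := by
    simp [mul_right_comm _ _ (b _), ← mul_sum, ha]
  have hjk : ∑ i, ∑ j, ∑ k, (if j = k then a i * a j * b k else 0) = 0 := by
    simp [mul_assoc, ← mul_sum, ← sum_mul, ha]
  have hijk : ∑ i, ∑ j, ∑ k, (if i = j ∧ j = k then a i * a j * b k else 0)
      = ∑ i, a i ^ 2 * b i := by
    simp [ite_and, sq]
  simp only [split, sum_add_distrib, ← mul_sum, hb, hij, hik, hjk, hijk, mul_zero,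
    sum_const_zero]
  ring

end Finset

theorem Finset.sum_sub_average_eq_zero {α K : Type*} [Fintype α] [Nonempty α] [Field K]
    [CharZero K] (x : α → K) : ∑ i, (x i - (∑ j, x j) / Fintype.card α) = 0 := by
  rw [sum_sub_distrib, sum_const, card_univ, nsmul_eq_mul, mul_div_cancel₀ _ (by simp), sub_self]

noncomputable def inclusionProb (N n m : ℕ) : ℝ := n.descFactorial m / N.descFactorial m

theorem natCast_card_filter_subset_eq_choose_mul_inclusionProb {α : Type*} [Fintype α]
    [DecidableEq α] (n : ℕ) (T : Finset α) :
    (#{S ∈ powersetCard n univ | T ⊆ S} : ℝ)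
      = (Fintype.card α).choose n * inclusionProb (Fintype.card α) n #T := by
  have hcount := card_filter_powersetCard_subset_mul_descFactorial (subset_univ T) n
  have hT : (Fintype.card α).descFactorial #T ≠ 0 :=
    (Nat.descFactorial_pos.2 (card_le_univ T)).ne'
  rw [card_univ] at hcount
  rw [inclusionProb, mul_div_assoc', eq_div_iff (by exact_mod_cast hT)]
  exact_mod_cast hcount

theorem inclusionProb_one_sub_three_mul_two_add_two_mul_three {N : ℕ} (hN : 3 ≤ N) (n : ℕ) :
    inclusionProb N n 1 - 3 * inclusionProb N n 2 + 2 * inclusionProb N n 3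
      = n * (N - n) * (N - 2 * n) / (N * (N - 1) * (N - 2)) := by
  have cast_three (a : ℕ) : (a.descFactorial 3 : ℝ) = a * (a - 1) * (a - 2) := by
    rw [← descPochhammer_eval_eq_descFactorial]
    simp [descPochhammer_succ_eval]
  have hN' : (3 : ℝ) ≤ N := by exact_mod_cast hN
  have : (N : ℝ) - 1 ≠ 0 := by linarith
  have : (N : ℝ) - 2 ≠ 0 := by linarith
  simp only [inclusionProb, Nat.descFactorial_one, cast_three, Nat.cast_descFactorial_two]
  field_simp
  ring

theorem sum_powersetCard_sq_mul_sum_of_sum_eq_zero {α : Type*} [Fintype α] [DecidableEq α]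
    (n : ℕ) {a b : α → ℝ} (ha : ∑ i, a i = 0) (hb : ∑ i, b i = 0) :
    ∑ S ∈ powersetCard n univ, (∑ i ∈ S, a i) ^ 2 * ∑ i ∈ S, b i
      = (Fintype.card α).choose n * (inclusionProb (Fintype.card α) n 1
          - 3 * inclusionProb (Fintype.card α) n 2 + 2 * inclusionProb (Fintype.card α) n 3)
        * ∑ i, a i ^ 2 * b i := by
  simp_rw [sum_sq_mul_sum_eq_sum_card_filter_subset,
    natCast_card_filter_subset_eq_choose_mul_inclusionProb,
    mul_left_comm _ ((Fintype.card α).choose n : ℝ), ← mul_sum]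
  rw [sum_mul_apply_card_of_sum_eq_zero ha hb, mul_assoc]

/-- Under SRSWOR of size `n` from a population of size `N ≥ 3` with variables `x, z`,
`E((x̄ − X̄)²(z̄ − Z̄)) = ((N−n)(N−2n))/((N−1)(N−2)n²) · C₀₂₁`, where
`C₀₂₁ = (1/N)∑ (xᵢ − X̄)²(zᵢ − Z̄)`. -/
theorem srswor_mixed_third_moment (N n : ℕ) (hN : 3 ≤ N) (hn1 : 1 ≤ n) (hnN : n ≤ N)
    (x z : Fin N → ℝ) (Xbar Zbar : ℝ)
    (hXbar : Xbar = (∑ i, x i) / (N : ℝ)) (hZbar : Zbar = (∑ i, z i) / (N : ℝ)) :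
    (∑ S ∈ (univ : Finset (Fin N)).powersetCard n,
        ((∑ i ∈ S, x i) / (n : ℝ) - Xbar) ^ 2 * ((∑ i ∈ S, z i) / (n : ℝ) - Zbar)) /
      (((univ : Finset (Fin N)).powersetCard n).card : ℝ)
      = (((N : ℝ) - n) * ((N : ℝ) - 2 * n)) / ((((N : ℝ) - 1) * ((N : ℝ) - 2)) * (n : ℝ) ^ 2) *
          ((∑ i, (x i - Xbar) ^ 2 * (z i - Zbar)) / (N : ℝ)) := by
  have : NeZero N := ⟨by omega⟩
  have hn : (n : ℝ) ≠ 0 := by exact_mod_cast (by omega : n ≠ 0)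
  have hchoose : (N.choose n : ℝ) ≠ 0 := by exact_mod_cast (Nat.choose_pos hnN).ne'
  have hx : ∑ i, (x i - Xbar) = 0 := by
    simpa [hXbar] using sum_sub_average_eq_zero x
  have hz : ∑ i, (z i - Zbar) = 0 := by
    simpa [hZbar] using sum_sub_average_eq_zero z
  have deviation {S : Finset (Fin N)} (hS : #S = n) (c : Fin N → ℝ) (m : ℝ) :
      (∑ i ∈ S, c i) / n - m = (∑ i ∈ S, (c i - m)) / n := by
    rw [sum_sub_distrib, sum_const, hS, nsmul_eq_mul, sub_div, mul_div_cancel_left₀ _ hn]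
  rw [sum_congr rfl fun S hS => by
      rw [deviation (mem_powersetCard.1 hS).2 x, deviation (mem_powersetCard.1 hS).2 z]]
  simp_rw [div_pow, div_mul_div_comm]
  rw [← sum_div, sum_powersetCard_sq_mul_sum_of_sum_eq_zero n hx hz, card_powersetCard, card_univ,
    Fintype.card_fin, inclusionProb_one_sub_three_mul_two_add_two_mul_three hN]
  have hN' : (3 : ℝ) ≤ N := by exact_mod_cast hN
  have : (N : ℝ) - 1 ≠ 0 := by linarith
  have : (N : ℝ) - 2 ≠ 0 := by linarith
  field_simp
end
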